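/- arXiv:2407.01056 — 5 statements merged into one kernel-verified Lean document; each statement's English description precedes it below -/
import Mathlib

section
/- Let p be a prime, let A ⊆ C be a ring extension of characteristic p of finite exponent such that C admits a p-basis x_1,…,x_n over C^{[1]}, and let M be a C-module. For every A-linear map ∂ : C^{[1]} → M, define D : C → M by D(Σ_α λ_α x^α) = Σ_α x^α·∂(λ_α), where the sum ranges over the reduced monomials x^α = x_1^{α_1}⋯x_n^{α_n} with 0 ≤ α_i < p and λ_α ∈ C^{[1]}. Then the assignment ∂ ↦ D is a morphism of left C-modules ext : Hom_A(C^{[1]},M) → Hom_A(C,M) such that the composition of ext with restriction to C^{[1]} is the identity, and for every k ≥ 0, ext maps Diff_A^k(C^{[1]},M) into Diff_A^{pk}(C,M); in particular every A-differential operator C^{[1]} → M of order ≤ k extends to an A-differential operator C → M of order ≤ pk. -/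
open scoped TensorProduct

universe u

namespace PIPaper

/-! ### Exponent, `C^{[e]}`, F-extensions -/

section Exponent

variable (p : ℕ) (R S : Type u) [CommRing R] [CommRing S] [Algebra R S]

/-- Every element of `S` has `p^e`-th power in (the image of) `R`. -/
def HasExpLE (e : ℕ) : Prop :=
  ∀ x : S, x ^ p ^ e ∈ (algebraMap R S).range

/-- The extension `R ⊆ S` has finite exponent. -/
def HasFinExp : Prop := ∃ e, HasExpLE p R S e

/-- `exp(S/R)`, the least exponent of the extension. -/
noncomputable def ringExp : ℕ := sInf {e | HasExpLE p R S e}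

/-- `S^{[e]} = R[S^{p^e}]`, the `R`-subalgebra of `S` generated by all `p^e`-th powers. -/
def subalgPow (e : ℕ) : Subalgebra R S :=
  Algebra.adjoin R (Set.range fun x : S => x ^ p ^ e)

/-- `R ⊆ S` is an `𝓕`-extension: finite, of finite exponent, and `S` is projective
over `S^{[e]} = R[S^{p^e}]` for every `e`. -/
def IsFExt : Prop :=
  Module.Finite R S ∧ HasFinExp p R S ∧
    ∀ e : ℕ, Module.Projective (subalgPow p R S e) S

lemma subalgPow_succ_le (e : ℕ) : subalgPow p R S (e + 1) ≤ subalgPow p R S e := by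
  apply Algebra.adjoin_le
  rintro _ ⟨x, rfl⟩
  have hx : x ^ p ^ (e + 1) = (x ^ p) ^ p ^ e := by
    rw [← pow_mul, ← pow_succ']
  show x ^ p ^ (e + 1) ∈ subalgPow p R S e
  rw [hx]
  exact Algebra.subset_adjoin ⟨x ^ p, rfl⟩

end Exponent

/-! ### Purely inseparable extensions -/

section PI

variable (p : ℕ) (R S : Type u) [CommRing R] [CommRing S] [Algebra R S]

/-- The model algebra `A'[X_1,…,X_n]/⟨X_1^{p^{e_1}},…,X_n^{p^{e_n}}⟩`. -/
abbrev truncModel (n : ℕ) (ee : Fin n → ℕ) (A' : Type u) [CommRing A'] : Type u :=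
  MvPolynomial (Fin n) A' ⧸
    Ideal.span (Set.range fun i : Fin n =>
      (MvPolynomial.X i : MvPolynomial (Fin n) A') ^ p ^ ee i)

/-- A witness that, after a faithfully flat base change `A_𝔭 → A'`, the extension
`C_𝔭 ⊗_{A_𝔭} A' = A' ⊗_A C` becomes a truncated polynomial algebra
`A'[X_1,…,X_n]/⟨X_i^{p^{e_i}}⟩` with all `e_i > 0`. -/
structure PISplitting (𝔭 : Ideal R) [𝔭.IsPrime] : Type (u + 1) where
  A' : Type u
  [commRingA' : CommRing A']
  [algLoc : Algebra (Localization.AtPrime 𝔭) A']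
  [algR : Algebra R A']
  tower : IsScalarTower R (Localization.AtPrime 𝔭) A'
  faithfullyFlat : Module.FaithfullyFlat (Localization.AtPrime 𝔭) A'
  n : ℕ
  ee : Fin n → ℕ
  ee_pos : ∀ i, 0 < ee i
  equiv : (A' ⊗[R] S) ≃ₐ[A'] truncModel p n ee A'

/-- `R ⊆ S` is a purely inseparable (ring) extension. -/
def IsPurelyInsep : Prop :=
  HasFinExp p R S ∧ Module.Finite R S ∧ Module.Projective R S ∧
    ∀ (𝔭 : Ideal R) [𝔭.IsPrime], Nonempty (PISplitting p R S 𝔭)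

/-- `R ⊆ S` is a purely inseparable extension of exponent one, i.e. the faithfully
flat base changes can be taken of the form `A'[X_1,…,X_n]/⟨X_1^p,…,X_n^p⟩`. -/
def IsPurelyInsep1 : Prop :=
  HasExpLE p R S 1 ∧ Module.Finite R S ∧ Module.Projective R S ∧
    ∀ (𝔭 : Ideal R) [𝔭.IsPrime], ∃ sp : PISplitting p R S 𝔭, ∀ i, sp.ee i = 1

/-- `x_1,…,x_n` is a `p`-basis of `S` over `R`: the reduced monomials
`x_1^{α_1} ⋯ x_n^{α_n}` with `0 ≤ α_i < p` form a basis of `S` as an `R`-module. -/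
def IsPBasis {n : ℕ} (x : Fin n → S) : Prop :=
  LinearIndependent R (fun α : Fin n → Fin p => ∏ i, x i ^ (α i : ℕ)) ∧
    Submodule.span R (Set.range fun α : Fin n → Fin p => ∏ i, x i ^ (α i : ℕ)) = ⊤

/-- `R ⊆ S` is a Galois extension of exponent one: finite, of exponent one, `S`
projective over `R`, and each localization at a prime of `R` admits a `p`-basis. -/
def IsGalois1 : Prop :=
  Module.Finite R S ∧ HasExpLE p R S 1 ∧ Module.Projective R S ∧
    ∀ (𝔭 : Ideal R) [𝔭.IsPrime],
      ∃ (n : ℕ) (x : Fin n → Localization.AtPrime 𝔭 ⊗[R] S),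
        IsPBasis p (Localization.AtPrime 𝔭) (Localization.AtPrime 𝔭 ⊗[R] S) x

/-- The extension `T₁ ⊆ T₂` of subalgebras of `S` is Galois of exponent one. -/
def IsGalois1Between (T₁ T₂ : Subalgebra R S) (h : T₁ ≤ T₂) : Prop :=
  letI : Algebra T₁ T₂ := (Subalgebra.inclusion h).toRingHom.toAlgebra
  IsGalois1 p T₁ T₂

end PI

/-! ### Principal parts and differential operators -/

/-- The module of principal parts `P^k_{S/R} = (S ⊗[R] S) / J^{k+1}`, a left `S`-module. -/
abbrev prinParts (R S : Type u) [CommRing R] [CommRing S] [Algebra R S] (k : ℕ) : Type u :=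
  (S ⊗[R] S) ⧸ (KaehlerDifferential.ideal R S ^ (k + 1))

section Diff

variable (R S M : Type u) [CommRing R] [CommRing S] [Algebra R S]
  [AddCommGroup M] [Module R M] [Module S M] [IsScalarTower R S M]

/-- `[x, D] : c ↦ x • D c - D (x * c)`. -/
def opBracket (x : S) (D : S →ₗ[R] M) : S →ₗ[R] M :=
  x • D - D ∘ₗ LinearMap.mulLeft R x

/-- `D : S → M` is an `R`-differential operator of order at most `n`:
all `(n+1)`-fold iterated brackets `[x_0,[x_1,…,[x_n, D]…]]` vanish. -/
def IsDiffOpLE (n : ℕ) (D : S →ₗ[R] M) : Prop :=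
  ∀ xs : List S, xs.length = n + 1 → xs.foldr (opBracket R S M) D = 0

end Diff

/-- `Diff_R^n(S)` is a direct summand of `End_R(S)` as a left `S`-module:
there is an `S`-linear projection of `End_R(S)` onto the submodule of
differential operators of order at most `n`. -/
def DiffSummand (R S : Type u) [CommRing R] [CommRing S] [Algebra R S] (n : ℕ) : Prop :=
  ∃ π : (S →ₗ[R] S) →ₗ[S] (S →ₗ[R] S),
    (∀ D, IsDiffOpLE R S S n (π D)) ∧ ∀ D, IsDiffOpLE R S S n D → π D = D

/-- `D` is an `R`-derivation of `S` (as an `R`-linear endomorphism). -/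
def IsLinearDerivation (R S : Type u) [CommRing R] [CommRing S] [Algebra R S]
    (D : S →ₗ[R] S) : Prop :=
  ∀ x y : S, D (x * y) = x * D y + y * D x

/-- `Der_R(S)` is a direct summand of `End_R(S)` as a left `S`-module. -/
def DerSummand (R S : Type u) [CommRing R] [CommRing S] [Algebra R S] : Prop :=
  ∃ π : (S →ₗ[R] S) →ₗ[S] (S →ₗ[R] S),
    (∀ D, IsLinearDerivation R S (π D)) ∧ ∀ D, IsLinearDerivation R S D → π D = D

/-! ### Jacobson–Bourbaki -/

section JB

variable (A C : Type u) [CommRing A] [CommRing C] [Algebra A C]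

/-- `End_B(C)` as an `A`-subalgebra of `End_A(C)`, for an intermediate ring
`A ⊆ B ⊆ C`. -/
def endOver (B : Subalgebra A C) : Subalgebra A (Module.End A C) where
  carrier := {φ : Module.End A C | ∀ b ∈ B, ∀ x : C, φ (b * x) = b * φ x}
  mul_mem' := by
    intro φ ψ hφ hψ b hb x
    show φ (ψ (b * x)) = b * φ (ψ x)
    rw [hψ b hb x]
    exact hφ b hb (ψ x)
  one_mem' := by intro b hb x; rfl
  add_mem' := by
    intro φ ψ hφ hψ b hb x
    show φ (b * x) + ψ (b * x) = b * (φ x + ψ x)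
    rw [hφ b hb x, hψ b hb x, mul_add]
  zero_mem' := by intro b hb x; simp
  algebraMap_mem' := by
    intro a b hb x
    show algebraMap A (Module.End A C) a (b * x) = b * (algebraMap A (Module.End A C) a x)
    rw [Module.algebraMap_end_apply, Module.algebraMap_end_apply, mul_smul_comm]

/-- `B_H := {x ∈ C : φ (x * c) = x * φ c for all φ ∈ H, c ∈ C}`. -/
def fixedSubalg (H : Subalgebra A (Module.End A C)) : Subalgebra A C where
  carrier := {c : C | ∀ φ ∈ H, ∀ x : C, φ (c * x) = c * φ x}
  mul_mem' := by
    intro a b ha hb φ hφ x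
    show φ (a * b * x) = a * b * φ x
    rw [mul_assoc, ha φ hφ (b * x), hb φ hφ x, mul_assoc]
  one_mem' := by intro φ hφ x; simp
  add_mem' := by
    intro a b ha hb φ hφ x
    show φ ((a + b) * x) = (a + b) * φ x
    rw [add_mul, map_add, ha φ hφ x, hb φ hφ x, add_mul]
  zero_mem' := by intro φ hφ x; simp
  algebraMap_mem' := by
    intro a φ hφ x
    show φ (algebraMap A C a * x) = algebraMap A C a * φ x
    rw [← Algebra.smul_def, map_smul, Algebra.smul_def]

/-- `H` is a `C`-submodule of `End_A(C)` which is a direct summand as a left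
`C`-module: `H` is stable under the `C`-action and there is a `C`-linear
projection of `End_A(C)` onto `H`. -/
def IsCSummand (H : Subalgebra A (Module.End A C)) : Prop :=
  (∀ (c : C) (φ : Module.End A C), φ ∈ H → c • φ ∈ H) ∧
  ∃ π : Module.End A C →ₗ[C] Module.End A C,
    (∀ D, π D ∈ H) ∧ ∀ D ∈ H, π D = D

end JB

/-! ### Kernel of a family of derivations -/

/-- The common kernel `∩ ker ∂_i` of a family of derivations, as a subring
(`ℤ`-subalgebra) of `C`. -/
def kerDer (C : Type u) [CommRing C] {n : ℕ} (d : Fin n → Derivation ℤ C C) :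
    Subalgebra ℤ C where
  carrier := {c : C | ∀ i, d i c = 0}
  mul_mem' := by
    intro a b ha hb i
    rw [Derivation.leibniz, ha i, hb i, smul_zero, smul_zero, add_zero]
  one_mem' := by intro i; simp
  add_mem' := by intro a b ha hb i; rw [map_add, ha i, hb i, add_zero]
  algebraMap_mem' := by intro m i; simp

/-- Truncated-polynomial generator `x_i`, the class of `X_i`. -/
noncomputable def truncX (p : ℕ) (n : ℕ) (ee : Fin n → ℕ) (A' : Type u) [CommRing A'] (i : Fin n) :
    truncModel p n ee A' :=
  Ideal.Quotient.mk _ (MvPolynomial.X i)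

/-- The monomial `x^β = x_1^{β_1} ⋯ x_n^{β_n}` in the truncated polynomial algebra. -/
noncomputable def truncMon (p : ℕ) (n : ℕ) (ee : Fin n → ℕ) (A' : Type u) [CommRing A']
    (β : Fin n → ℕ) : truncModel p n ee A' :=
  ∏ j, truncX p n ee A' j ^ β j

/-!
Write `D = ext ∂` as `u ↦ ∑ α, x^α • ∂ (λ_α u)`, with `λ_α` the coordinates in the basis of
reduced monomials. A bracket with `b ∈ C^{[1]}` passes to `∂`. A bracket with `x_i` gives two
operators of the same shape: in one the coefficient family is hit by `x_i - τ_i`, where `τ_i` is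
the twisted shift of multi-indices read off from `x_i · x^β`; in the other `∂` is replaced by
`[x_i^p, ∂]`. Since `τ_i ^ p = x_i ^ p`, the operator `x_i - τ_i` is nilpotent of order `p` in
characteristic `p`, and it kills the family `α ↦ x^α`. So `p` brackets with the same `x_i` cost
at least one order of `∂`; as `C^{[1]}` and the `x_i` generate `C`, any `pk + 1` brackets
kill `D`.
-/

section OpBracket

variable {R S M : Type u} [CommRing R] [CommRing S] [Algebra R S]
  [AddCommGroup M] [Module R M] [Module S M] [IsScalarTower R S M]

lemma opBracket_apply (x : S) (D : S →ₗ[R] M) (u : S) :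
    opBracket R S M x D u = x • D u - D (x * u) := rfl

lemma opBracket_add_left (x y : S) (D : S →ₗ[R] M) :
    opBracket R S M (x + y) D = opBracket R S M x D + opBracket R S M y D := by
  ext u
  simp only [opBracket_apply, LinearMap.add_apply, add_smul, add_mul, map_add]
  abel

lemma opBracket_add (x : S) (D E : S →ₗ[R] M) :
    opBracket R S M x (D + E) = opBracket R S M x D + opBracket R S M x E := by
  ext u
  simp only [opBracket_apply, LinearMap.add_apply, smul_add]
  abel

lemma opBracket_smul (x c : S) (D : S →ₗ[R] M) :
    opBracket R S M x (c • D) = c • opBracket R S M x D := by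
  ext u
  simp only [opBracket_apply, LinearMap.smul_apply, smul_sub, smul_comm x c]

lemma opBracket_comp_mulLeft (x c : S) (D : S →ₗ[R] M) :
    opBracket R S M x (D ∘ₗ LinearMap.mulLeft R c) =
      opBracket R S M x D ∘ₗ LinearMap.mulLeft R c := by
  ext u
  simp only [opBracket_apply, LinearMap.comp_apply, LinearMap.mulLeft_apply, mul_left_comm]

lemma opBracket_algebraMap (a : R) (D : S →ₗ[R] M) :
    opBracket R S M (algebraMap R S a) D = 0 := by
  ext u
  simp only [opBracket_apply, LinearMap.zero_apply, ← Algebra.smul_def, map_smul,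
    algebraMap_smul, sub_self]

lemma opBracket_mul (x y : S) (D : S →ₗ[R] M) :
    opBracket R S M (x * y) D =
      x • opBracket R S M y D + opBracket R S M x D ∘ₗ LinearMap.mulLeft R y := by
  ext u
  simp only [opBracket_apply, LinearMap.add_apply, LinearMap.smul_apply, LinearMap.comp_apply,
    LinearMap.mulLeft_apply, smul_sub, mul_smul, mul_assoc]
  abel

lemma foldr_opBracket_zero (xs : List S) : xs.foldr (opBracket R S M) 0 = 0 := by
  induction xs with
  | nil => rfl
  | cons x xs ih =>
    ext u
    simp [ih, opBracket_apply]

lemma foldr_opBracket_add (xs : List S) (D E : S →ₗ[R] M) :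
    xs.foldr (opBracket R S M) (D + E) =
      xs.foldr (opBracket R S M) D + xs.foldr (opBracket R S M) E := by
  induction xs with
  | nil => rfl
  | cons x xs ih => simp only [List.foldr_cons, ih, opBracket_add]

lemma foldr_opBracket_smul (xs : List S) (c : S) (D : S →ₗ[R] M) :
    xs.foldr (opBracket R S M) (c • D) = c • xs.foldr (opBracket R S M) D := by
  induction xs with
  | nil => rfl
  | cons x xs ih => simp only [List.foldr_cons, ih, opBracket_smul]

lemma foldr_opBracket_comp_mulLeft (xs : List S) (c : S) (D : S →ₗ[R] M) :
    xs.foldr (opBracket R S M) (D ∘ₗ LinearMap.mulLeft R c) =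
      xs.foldr (opBracket R S M) D ∘ₗ LinearMap.mulLeft R c := by
  induction xs with
  | nil => rfl
  | cons x xs ih => simp only [List.foldr_cons, ih, opBracket_comp_mulLeft]

variable (R S M) in
/-- `IsDiffOpLE R S M n D` is definitionally `BracketsVanish R S M (n + 1) D`. -/
def BracketsVanish (N : ℕ) (D : S →ₗ[R] M) : Prop :=
  ∀ xs : List S, xs.length = N → xs.foldr (opBracket R S M) D = 0

namespace BracketsVanish

variable {N : ℕ} {D E : S →ₗ[R] M}

lemma zero : BracketsVanish R S M N 0 := fun xs _ => foldr_opBracket_zero xs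

lemma eq_zero (hD : BracketsVanish R S M 0 D) : D = 0 := hD [] rfl

lemma add (hD : BracketsVanish R S M N D) (hE : BracketsVanish R S M N E) :
    BracketsVanish R S M N (D + E) := fun xs hxs => by
  rw [foldr_opBracket_add, hD xs hxs, hE xs hxs, add_zero]

lemma smul (c : S) (hD : BracketsVanish R S M N D) : BracketsVanish R S M N (c • D) :=
  fun xs hxs => by rw [foldr_opBracket_smul, hD xs hxs, smul_zero]

lemma comp_mulLeft (c : S) (hD : BracketsVanish R S M N D) :
    BracketsVanish R S M N (D ∘ₗ LinearMap.mulLeft R c) := fun xs hxs => by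
  rw [foldr_opBracket_comp_mulLeft, hD xs hxs, LinearMap.zero_comp]

end BracketsVanish

lemma bracketsVanish_succ_iff {N : ℕ} {D : S →ₗ[R] M} :
    BracketsVanish R S M (N + 1) D ↔ ∀ g, BracketsVanish R S M N (opBracket R S M g D) := by
  refine ⟨fun hD g xs hxs => ?_, fun hD xs hxs => ?_⟩
  · simpa using hD (xs ++ [g]) (by simp [hxs])
  · obtain ⟨ys, g, rfl⟩ := (List.eq_nil_or_concat' xs).resolve_left (by rintro rfl; simp at hxs)
    simpa using hD g ys (by simpa using hxs)

/-- Brackets with the elements of a generating set suffice: those `c` with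
`[c, D]` of order `N` form a subalgebra, by `opBracket_mul`. -/
lemma bracketsVanish_succ_of_adjoin_eq_top {GS : Set S} (hGS : Algebra.adjoin R GS = ⊤)
    {N : ℕ} {D : S →ₗ[R] M} (hD : ∀ g ∈ GS, BracketsVanish R S M N (opBracket R S M g D)) :
    BracketsVanish R S M (N + 1) D := by
  refine bracketsVanish_succ_iff.2 fun c => ?_
  have hc : c ∈ Algebra.adjoin R GS := hGS ▸ Algebra.mem_top
  induction hc using Algebra.adjoin_induction with
  | mem g hg => exact hD g hg
  | algebraMap a => rw [opBracket_algebraMap]; exact .zero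
  | add u v _ _ hu hv => rw [opBracket_add_left]; exact hu.add hv
  | mul u v _ _ hu hv => rw [opBracket_mul]; exact (hv.smul u).add (hu.comp_mulLeft v)

end OpBracket

section Monomials

variable {p n : ℕ} [NeZero p] {C : Type u} [CommRing C] (x : Fin n → C)

def redMonomial (α : Fin n → Fin p) : C := ∏ i, x i ^ (α i : ℕ)

/-- The factor `x_i ^ p` picked up when the exponent of `x_i` wraps around from `p - 1`
to `0`. -/
def wrapFactor (i : Fin n) (v : Fin p) : C := if (v : ℕ) + 1 = p then x i ^ p else 1

lemma mul_redMonomial (i : Fin n) (β : Fin n → Fin p) :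
    x i * redMonomial x β = wrapFactor x i (β i) * redMonomial x (β + Pi.single i 1) := by
  have hrest : ∀ j ∈ Finset.univ.erase i,
      x j ^ ((β + Pi.single i 1 : Fin n → Fin p) j : ℕ) = x j ^ (β j : ℕ) := fun j hj => by
    simp [Finset.ne_of_mem_erase hj]
  unfold redMonomial
  rw [← Finset.mul_prod_erase _ _ (Finset.mem_univ i),
    ← Finset.mul_prod_erase _ _ (Finset.mem_univ i), Finset.prod_congr rfl hrest, ← mul_assoc,
    ← mul_assoc, Pi.add_apply, Pi.single_eq_same]
  congr 1
  by_cases hv : (β i : ℕ) + 1 = p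
  · have hwrap : ((β i + 1 : Fin p) : ℕ) = 0 := by
      rw [Fin.val_add, Fin.val_one', Nat.add_mod_mod, hv, Nat.mod_self]
    rw [wrapFactor, if_pos hv, hwrap, pow_zero, mul_one, ← pow_succ', hv]
  · have hlt := (β i).isLt
    rw [wrapFactor, if_neg hv, Fin.val_add_one_of_lt' (by omega), one_mul, pow_succ']

lemma add_single_apply_of_ne {i j : Fin n} (h : j ≠ i) (β : Fin n → Fin p) (v : Fin p) :
    (β + Pi.single i v : Fin n → Fin p) j = β j := by
  simp [h]

lemma prod_wrapFactor (i : Fin n) : ∏ v : Fin p, wrapFactor x i v = x i ^ p := by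
  have hp := NeZero.pos p
  rw [Finset.prod_eq_single ⟨p - 1, by omega⟩, wrapFactor, if_pos (by simp; omega)]
  · intro v _ hv
    rw [wrapFactor, if_neg fun h => hv (Fin.ext (by simp; omega))]
  · simp

end Monomials

section CoeffOps

variable (p : ℕ) {n : ℕ} [NeZero p] {C : Type u} [CommRing C] (x : Fin n → C)

/-- The coefficient families `c` of the operators `u ↦ ∑ α, c α • e (λ_α u)`, where
`λ_α` are the coordinates with respect to the reduced monomials. -/
abbrev Coeffs (p n : ℕ) (C : Type u) : Type u := (Fin n → Fin p) → C

def twist (i : Fin n) : Module.End C (Coeffs p n C) where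
  toFun c β := wrapFactor x i (β i) * c (β + Pi.single i 1)
  map_add' c c' := by funext β; simp [mul_add]
  map_smul' a c := by funext β; simp [mul_left_comm]

def coeffBracket (i : Fin n) : Module.End C (Coeffs p n C) :=
  algebraMap C _ (x i) - twist p x i

def carry (i : Fin n) : Module.End C (Coeffs p n C) where
  toFun c β := if (β i : ℕ) + 1 = p then c (β + Pi.single i 1) else 0
  map_add' c c' := by funext β; by_cases h : (β i : ℕ) + 1 = p <;> simp [h]
  map_smul' a c := by funext β; by_cases h : (β i : ℕ) + 1 = p <;> simp [h]

lemma twist_apply (i : Fin n) (c : Coeffs p n C) (β : Fin n → Fin p) :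
    twist p x i c β = wrapFactor x i (β i) * c (β + Pi.single i 1) := rfl

lemma carry_apply (i : Fin n) (c : Coeffs p n C) (β : Fin n → Fin p) :
    carry p i c β = if (β i : ℕ) + 1 = p then c (β + Pi.single i 1) else 0 := rfl

lemma coeffBracket_redMonomial (i : Fin n) : coeffBracket p x i (redMonomial x) = 0 := by
  funext β
  simp [coeffBracket, twist_apply, mul_redMonomial]

lemma commute_twist {i j : Fin n} (h : i ≠ j) : Commute (twist p x i) (twist p x j) := by
  refine LinearMap.ext fun c => funext fun β => ?_
  simp only [Module.End.mul_apply, twist_apply, add_single_apply_of_ne h,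
    add_single_apply_of_ne h.symm, add_right_comm β]
  ring

lemma commute_coeffBracket {i j : Fin n} (h : i ≠ j) :
    Commute (coeffBracket p x i) (coeffBracket p x j) :=
  (Algebra.commute_algebraMap_left _ _).sub_left
    ((Algebra.commute_algebraMap_right _ _).sub_right (commute_twist p x h))

lemma commute_coeffBracket_carry {i j : Fin n} (h : i ≠ j) :
    Commute (coeffBracket p x i) (carry p j) := by
  refine (Algebra.commute_algebraMap_left _ _).sub_left ?_
  refine LinearMap.ext fun c => funext fun β => ?_
  simp only [Module.End.mul_apply, twist_apply, carry_apply, add_single_apply_of_ne h,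
    add_single_apply_of_ne h.symm, add_right_comm β]
  split_ifs <;> simp

open Fin.NatCast in
lemma twist_pow_apply (i : Fin n) (t : ℕ) (c : Coeffs p n C) (β : Fin n → Fin p) :
    (twist p x i ^ t) c β =
      (∏ l ∈ Finset.range t, wrapFactor x i (β i + (l : Fin p))) *
        c (β + Pi.single i (t : Fin p)) := by
  induction t generalizing c with
  | zero => simp
  | succ t ih =>
    rw [pow_succ, Module.End.mul_apply, ih, twist_apply, Finset.prod_range_succ]
    simp only [Pi.add_apply, Pi.single_eq_same, Nat.cast_succ, Pi.single_add, add_assoc]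
    ring

open Fin.NatCast in
lemma twist_pow_self (i : Fin n) : twist p x i ^ p = algebraMap C _ (x i ^ p) := by
  refine LinearMap.ext fun c => funext fun β => ?_
  rw [twist_pow_apply, Fin.natCast_self, Pi.single_zero, add_zero,
    ← Fin.prod_univ_eq_prod_range (fun l : ℕ => wrapFactor x i (β i + (l : Fin p))),
    Fintype.prod_equiv (Equiv.addLeft (β i)) _ (wrapFactor x i) (fun v => by simp),
    prod_wrapFactor]
  rfl

lemma coeffBracket_pow_self [Fact p.Prime] [CharP C p] (i : Fin n) :
    coeffBracket p x i ^ p = 0 := by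
  have hinj : Function.Injective (algebraMap C (Module.End C (Coeffs p n C))) := fun a a' h => by
    simpa using congr_fun (LinearMap.congr_fun h fun _ => 1) 0
  have := charP_of_injective_algebraMap hinj p
  rw [coeffBracket, sub_pow_char_of_commute _ (Algebra.commute_algebraMap_left _ _),
    twist_pow_self, map_pow, sub_self]

end CoeffOps

section CoordSum

variable {p n : ℕ} {A C M : Type u} [CommRing A] [CommRing C] [Algebra A C]
  [AddCommGroup M] [Module A M] [Module C M] [IsScalarTower A C M]
  {B : Subalgebra A C} (b : Module.Basis (Fin n → Fin p) B C)

noncomputable def coordSum (c : Coeffs p n C) : (B →ₗ[A] M) →ₗ[C] (C →ₗ[A] M) :=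
  ∑ α, c α • LinearMap.lcomp C M ((b.coord α).restrictScalars A)

lemma coordSum_apply (c : Coeffs p n C) (e : B →ₗ[A] M) (u : C) :
    coordSum b c e u = ∑ α, c α • e (b.repr u α) := by
  simp [coordSum]

lemma coordSum_zero_left : coordSum (M := M) b 0 = 0 := by
  simp [coordSum]

lemma coordSum_smul_basis (c : Coeffs p n C) (e : B →ₗ[A] M) (lam : B) (α : Fin n → Fin p) :
    coordSum b c e (lam • b α) = c α • e lam := by
  rw [coordSum_apply, Finset.sum_eq_single α (fun β _ hβ => by simp [Ne.symm hβ]) (by simp)]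
  simp

lemma opBracket_coordSum_of_mem (g : B) (c : Coeffs p n C) (e : B →ₗ[A] M) :
    opBracket A C M g (coordSum b c e) = coordSum b c (opBracket A B M g e) := by
  ext u
  have hrepr : ∀ α, b.repr ((g : C) * u) α = g * b.repr u α := fun α => by
    rw [← smul_eq_mul, ← Subalgebra.smul_def, map_smul, Finsupp.smul_apply, smul_eq_mul]
  simp only [opBracket_apply, coordSum_apply, hrepr, Finset.smul_sum, ← Finset.sum_sub_distrib,
    smul_sub, Subalgebra.smul_def, smul_comm (g : C)]

variable (x : Fin n → C) (hb : ∀ α, b α = redMonomial x α)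
include hb

lemma adjoin_union_range_eq_top : Algebra.adjoin A ((B : Set C) ∪ Set.range x) = ⊤ := by
  refine eq_top_iff.2 fun u _ => ?_
  rw [← b.sum_repr u]
  refine Subalgebra.sum_mem _ fun α _ => ?_
  rw [Subalgebra.smul_def, smul_eq_mul, hb]
  refine Subalgebra.mul_mem _ (Algebra.subset_adjoin (Or.inl (b.repr u α).2))
    (Subalgebra.prod_mem _ fun i _ => Subalgebra.pow_mem _ ?_ _)
  exact Algebra.subset_adjoin (Or.inr ⟨i, rfl⟩)

omit hb in
lemma wrapFactor_mem (hxp : ∀ i, x i ^ p ∈ B) (i : Fin n) (v : Fin p) :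
    wrapFactor x i v ∈ B := by
  unfold wrapFactor
  split_ifs
  exacts [hxp i, B.one_mem]

variable [NeZero p] (hxp : ∀ i, x i ^ p ∈ B)
include hxp

lemma repr_mul_apply_add_single (i : Fin n) (u : C) (β : Fin n → Fin p) :
    b.repr (x i * u) (β + Pi.single i 1) =
      ⟨wrapFactor x i (β i), wrapFactor_mem x hxp i _⟩ * b.repr u β := by
  have hlin : (b.coord (β + Pi.single i 1)) ∘ₗ LinearMap.mulLeft B (x i) =
      (⟨wrapFactor x i (β i), wrapFactor_mem x hxp i _⟩ : B) • b.coord β := by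
    refine b.ext fun γ => ?_
    have hxγ : x i * b γ =
        (⟨wrapFactor x i (γ i), wrapFactor_mem x hxp i _⟩ : B) • b (γ + Pi.single i 1) := by
      rw [hb, hb, Subalgebra.smul_def, smul_eq_mul, mul_redMonomial]
    by_cases hγ : γ = β
    · subst hγ
      simp [hxγ]
    · simp [hxγ, Ne.symm hγ]
  simpa using LinearMap.congr_fun hlin u

lemma opBracket_x_coordSum (i : Fin n) (c : Coeffs p n C) (e : B →ₗ[A] M) :
    opBracket A C M (x i) (coordSum b c e) =
      coordSum b (coeffBracket p x i c) e +
        coordSum b (carry p i c) (opBracket A B M ⟨x i ^ p, hxp i⟩ e) := by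
  ext u
  have hshift : ∑ α, c α • e (b.repr (x i * u) α) =
      ∑ β : Fin n → Fin p, c (β + Pi.single i 1) • e (b.repr (x i * u) (β + Pi.single i 1)) :=
    (Equiv.sum_comp (Equiv.addRight _) _).symm
  simp only [opBracket_apply, coordSum_apply, LinearMap.add_apply, hshift,
    repr_mul_apply_add_single b x hb hxp, Finset.smul_sum, ← Finset.sum_sub_distrib,
    ← Finset.sum_add_distrib]
  refine Finset.sum_congr rfl fun β _ => ?_
  by_cases hβ : (β i : ℕ) + 1 = p
  · simp only [coeffBracket, twist_apply, carry_apply, wrapFactor, hβ, if_true,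
      Subalgebra.smul_def, LinearMap.sub_apply, Module.algebraMap_end_apply, Pi.sub_apply,
      Pi.smul_apply, smul_eq_mul]
    rw [sub_smul, smul_sub, mul_smul, mul_smul, smul_comm (x i ^ p)]
    abel
  · simp only [coeffBracket, twist_apply, carry_apply, wrapFactor, hβ, if_false,
      LinearMap.sub_apply, Module.algebraMap_end_apply, Pi.sub_apply, Pi.smul_apply, smul_eq_mul,
      one_mul, zero_smul, add_zero, sub_smul, mul_smul]
    rw [show (⟨1, _⟩ : B) = 1 from rfl, one_mul]

end CoordSum

lemma sum_update_add_self {n : ℕ} (ν : Fin n → ℕ) (i : Fin n) (a : ℕ) :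
    ∑ l, Function.update ν i a l + ν i = ∑ l, ν l + a := by
  rw [Finset.sum_update_of_mem (Finset.mem_univ i),
    ← Finset.add_sum_erase _ _ (Finset.mem_univ i), Finset.sdiff_singleton_eq_erase]
  ring

section Main

variable {p n : ℕ} [Fact p.Prime] {A C M : Type u} [CommRing A] [CommRing C] [Algebra A C]
  [AddCommGroup M] [Module A M] [Module C M] [IsScalarTower A C M]
  {B : Subalgebra A C} (b : Module.Basis (Fin n → Fin p) B C)
  (x : Fin n → C) (hb : ∀ α, b α = redMonomial x α) (hxp : ∀ i, x i ^ p ∈ B)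

lemma coordSum_eq_zero {c : Coeffs p n C} {e : B →ₗ[A] M} {j : ℕ} {ν : Fin n → ℕ}
    (hc : ∀ i, (coeffBracket p x i ^ ν i) c = 0) (he : BracketsVanish A B M j e)
    (h : j = 0 ∨ ∃ i, ν i = 0) : coordSum b c e = 0 := by
  rcases h with rfl | ⟨i, hi⟩
  · rw [he.eq_zero, map_zero]
  · have hc0 := hc i
    rw [hi, pow_zero, Module.End.one_apply] at hc0
    rw [hc0, coordSum_zero_left, LinearMap.zero_apply]

variable [CharP C p]

include hb hxp in
/-- A bracket with `x i` either lowers `ν i` by one, or lowers the order `j` of `e` while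
resetting `ν i` to `p` (as `coeffBracket p x i ^ p = 0`): the weight `p * j + ∑ ν` drops. -/
theorem bracketsVanish_coordSum (N : ℕ) :
    ∀ (c : Coeffs p n C) (e : B →ₗ[A] M) (j : ℕ) (ν : Fin n → ℕ),
      (∀ i, (coeffBracket p x i ^ ν i) c = 0) → BracketsVanish A B M j e →
      p * j + ∑ i, ν i < N + p + n → BracketsVanish A C M N (coordSum b c e) := by
  induction N using Nat.strong_induction_on with
  | _ N ih =>
  intro c e j ν hc he hw
  by_cases hdeg : j = 0 ∨ ∃ i, ν i = 0
  · rw [coordSum_eq_zero b x hc he hdeg]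
    exact .zero
  push Not at hdeg
  obtain ⟨hj, hν⟩ := hdeg
  have hn : n ≤ ∑ i, ν i := by
    simpa using Finset.sum_le_sum fun i (_ : i ∈ Finset.univ) => Nat.one_le_iff_ne_zero.2 (hν i)
  have hp : 0 < p := (Fact.out : p.Prime).pos
  obtain ⟨j, rfl⟩ : ∃ j', j = j' + 1 := ⟨j - 1, by omega⟩
  rw [mul_add_one] at hw
  obtain ⟨N, rfl⟩ : ∃ N', N = N' + 1 := ⟨N - 1, by omega⟩
  rw [bracketsVanish_succ_iff] at he
  refine bracketsVanish_succ_of_adjoin_eq_top (adjoin_union_range_eq_top b x hb) ?_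
  rintro g (hg | ⟨i, rfl⟩)
  · lift g to B using hg
    rw [opBracket_coordSum_of_mem]
    exact ih N N.lt_succ_self c _ j ν hc (he g) (by omega)
  rw [opBracket_x_coordSum b x hb hxp]
  have hc₁ : ∀ l,
      (coeffBracket p x l ^ Function.update ν i (ν i - 1) l) (coeffBracket p x i c) = 0 := by
    intro l
    rcases eq_or_ne l i with rfl | hl
    · rw [Function.update_self, ← Module.End.mul_apply, ← pow_succ,
        Nat.sub_add_cancel (Nat.one_le_iff_ne_zero.2 (hν l)), hc]
    · rw [Function.update_of_ne hl, ← Module.End.mul_apply,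
        ((commute_coeffBracket p x hl).pow_left _).eq, Module.End.mul_apply, hc, map_zero]
  have hc₂ : ∀ l, (coeffBracket p x l ^ Function.update ν i p l) (carry p i c) = 0 := by
    intro l
    rcases eq_or_ne l i with rfl | hl
    · rw [Function.update_self, coeffBracket_pow_self, LinearMap.zero_apply]
    · rw [Function.update_of_ne hl, ← Module.End.mul_apply,
        ((commute_coeffBracket_carry p x hl).pow_left _).eq, Module.End.mul_apply, hc, map_zero]
  have hlower := sum_update_add_self ν i (ν i - 1)
  have hreset := sum_update_add_self ν i p
  have hνi := hν i
  exact (ih N N.lt_succ_self _ e (j + 1) _ hc₁ (bracketsVanish_succ_iff.2 he)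
    (by rw [mul_add_one]; omega)).add (ih N N.lt_succ_self _ _ j _ hc₂ (he _) (by omega))

end Main

theorem statement8_general (p : ℕ) (hp : p.Prime) (A C : Type u)
    [CommRing A] [CommRing C] [CharP C p] [Algebra A C]
    (n : ℕ) (x : Fin n → C) (hx : IsPBasis p (subalgPow p A C 1) C x)
    (M : Type u) [AddCommGroup M] [Module A M] [Module C M] [IsScalarTower A C M] :
    ∃ ext : ((subalgPow p A C 1) →ₗ[A] M) →ₗ[C] (C →ₗ[A] M),
      (∀ (d : (subalgPow p A C 1) →ₗ[A] M) (lam : subalgPow p A C 1) (α : Fin n → Fin p),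
        ext d ((lam : C) * ∏ i, x i ^ (α i : ℕ)) = (∏ i, x i ^ (α i : ℕ)) • d lam) ∧
      (∀ (d : (subalgPow p A C 1) →ₗ[A] M) (lam : subalgPow p A C 1),
        ext d (lam : C) = d lam) ∧
      (∀ (k : ℕ) (d : (subalgPow p A C 1) →ₗ[A] M),
        IsDiffOpLE A (subalgPow p A C 1) M k d →
          IsDiffOpLE A C M (p * k) (ext d)) := by
  have : Fact p.Prime := ⟨hp⟩
  set B := subalgPow p A C 1
  have hxp : ∀ i, x i ^ p ∈ B := fun i => Algebra.subset_adjoin ⟨x i, by rw [pow_one]⟩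
  let b : Module.Basis (Fin n → Fin p) B C := .mk hx.1 hx.2.ge
  have hb : ∀ α, b α = redMonomial x α := Module.Basis.mk_apply _ _
  have hext (d : B →ₗ[A] M) (lam : B) (α : Fin n → Fin p) :
      coordSum b (redMonomial x) d ((lam : C) * ∏ i, x i ^ (α i : ℕ)) =
        (∏ i, x i ^ (α i : ℕ)) • d lam := by
    have h := coordSum_smul_basis b (redMonomial x) d lam α
    rwa [hb, Subalgebra.smul_def, smul_eq_mul] at h
  refine ⟨coordSum b (redMonomial x), hext, fun d lam => by simpa using hext d lam 0,
    fun k d hd => ?_⟩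
  refine bracketsVanish_coordSum b x hb hxp (p * k + 1) _ d (k + 1) 1 (fun i => ?_) hd ?_
  · rw [Pi.one_apply, pow_one, coeffBracket_redMonomial]
  · simp only [Pi.one_apply, Finset.sum_const, Finset.card_univ, Fintype.card_fin, smul_eq_mul,
      mul_one, mul_add_one]
    omega

/-- Proposition 4.12, extension of differential operators: if `C` has a
`p`-basis over `C^{[1]}`, every `A`-linear map `∂ : C^{[1]} → M` extends canonically to
`D : C → M`, giving a `C`-linear section `ext` of restriction which maps differential
operators of order `≤ k` to differential operators of order `≤ pk`. -/
theorem statement8 (p : ℕ) (hp : p.Prime) (A C : Type u)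
    [CommRing A] [CommRing C] [CharP A p] [CharP C p] [Algebra A C]
    (hinj : Function.Injective (algebraMap A C)) (hexp : HasFinExp p A C)
    (n : ℕ) (x : Fin n → C) (hx : IsPBasis p (subalgPow p A C 1) C x)
    (M : Type u) [AddCommGroup M] [Module A M] [Module C M] [IsScalarTower A C M] :
    ∃ ext : ((subalgPow p A C 1) →ₗ[A] M) →ₗ[C] (C →ₗ[A] M),
      (∀ (d : (subalgPow p A C 1) →ₗ[A] M) (lam : subalgPow p A C 1) (α : Fin n → Fin p),
        ext d ((lam : C) * ∏ i, x i ^ (α i : ℕ)) = (∏ i, x i ^ (α i : ℕ)) • d lam) ∧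
      (∀ (d : (subalgPow p A C 1) →ₗ[A] M) (lam : subalgPow p A C 1),
        ext d (lam : C) = d lam) ∧
      (∀ (k : ℕ) (d : (subalgPow p A C 1) →ₗ[A] M),
        IsDiffOpLE A (subalgPow p A C 1) M k d →
          IsDiffOpLE A C M (p * k) (ext d)) :=
  statement8_general p hp A C n x hx M

end PIPaper
end

section
/- Let p be a prime, let C be an algebra over a ring A of characteristic p, and let M be a C-module. The restriction map Hom_A(C,M) → Hom_A(C^{[1]},M), D ↦ D|_{C^{[1]}}, is a morphism of left C-modules, and for every k ≥ 0 it maps Diff_A^{pk}(C,M) into Diff_A^k(C^{[1]},M); that is, if D : C → M is an A-differential operator of order ≤ pk, then its restriction to C^{[1]} is an A-differential operator of order ≤ k (where M is viewed as a C^{[1]}-module by restriction of scalars). -/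
/-!
Write `[x, D] = (L_x - R_x) D`, where `L_x` multiplies the values of `D` by `x` and `R_x`
precomposes `D` with multiplication by `x`. These are commuting `C`-linear endomorphisms of
`Hom_A(C, M)`, in which `p = 0`, so the Frobenius gives `[x^p, -] = [x, -]^p`: bracketing with
`x^p` lowers the order by `p`. As `[xy, D] = x[y, D] + [x, D(y ·)]`, the same holds for every
element of `C^{[1]} = A[C^p]`. Restriction to `C^{[1]}` commutes with brackets, so induction on `k`
through the recursive description of the order finishes the proof.
-/

open scoped TensorProduct

universe u

namespace PIPaper

section DiffOps

variable {A C M : Type u} [CommRing A] [CommRing C] [Algebra A C]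
  [AddCommGroup M] [Module A M] [Module C M] [IsScalarTower A C M]

theorem isDiffOpLE_zero_iff {D : C →ₗ[A] M} :
    IsDiffOpLE A C M 0 D ↔ ∀ x, opBracket A C M x D = 0 := by
  refine ⟨fun hD x => hD [x] rfl, fun h xs hxs => ?_⟩
  obtain ⟨x, rfl⟩ := List.length_eq_one_iff.mp hxs
  exact h x

theorem isDiffOpLE_succ_iff {n : ℕ} {D : C →ₗ[A] M} :
    IsDiffOpLE A C M (n + 1) D ↔ ∀ x, IsDiffOpLE A C M n (opBracket A C M x D) := by
  refine ⟨fun hD x xs hxs => ?_, fun h xs hxs => ?_⟩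
  · simpa using hD (xs ++ [x]) (by simp [hxs])
  · obtain ⟨ys, x, rfl⟩ := (List.eq_nil_or_concat xs).resolve_left (by rintro rfl; simp at hxs)
    simpa using h x ys (by simpa using hxs)

variable (A M) in
def precompMul : C →+* Module.End C (C →ₗ[A] M) where
  toFun y := LinearMap.lcomp C M (LinearMap.mulLeft A y)
  map_one' := by ext D z; simp
  map_mul' x y := by ext D z; simp [mul_left_comm]
  map_zero' := by ext D z; simp
  map_add' x y := by ext D z; simp [add_mul]

variable (A M) in
def opBracketEnd (x : C) : Module.End C (C →ₗ[A] M) :=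
  algebraMap C _ x - precompMul A M x

@[simp] theorem opBracketEnd_apply (x : C) (D : C →ₗ[A] M) :
    opBracketEnd A M x D = opBracket A C M x D := rfl

theorem opBracketEnd_add (x y : C) :
    opBracketEnd A M (x + y) = opBracketEnd A M x + opBracketEnd A M y := by
  simp only [opBracketEnd, map_add]
  abel

theorem opBracketEnd_algebraMap (a : A) : opBracketEnd A M (algebraMap A C a) = 0 := by
  ext D z
  simp [opBracketEnd, precompMul, ← Algebra.smul_def]

theorem opBracketEnd_mul (x y : C) :
    opBracketEnd A M (x * y) =
      algebraMap C _ x * opBracketEnd A M y + opBracketEnd A M x * precompMul A M y := by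
  simp only [opBracketEnd, map_mul, mul_sub, sub_mul]
  abel

theorem commute_precompMul_opBracketEnd (x y : C) :
    Commute (precompMul A M y) (opBracketEnd A M x) :=
  (Algebra.commute_algebraMap_right x _).sub_right
    (by rw [Commute, SemiconjBy, ← map_mul, ← map_mul, mul_comm])

theorem opBracketEnd_pow_char {p : ℕ} [CharP C p] (hp : p.Prime) (x : C) :
    opBracketEnd A M (x ^ p) = opBracketEnd A M x ^ p := by
  have hcomm : Commute (opBracketEnd A M x) (precompMul A M x) :=
    (commute_precompMul_opBracketEnd x x).symm
  have hsum : opBracketEnd A M x + precompMul A M x = algebraMap C _ x := sub_add_cancel _ _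
  have hp0 : (p : Module.End C (C →ₗ[A] M)) = 0 := by
    rw [← map_natCast (algebraMap C _), CharP.cast_eq_zero, map_zero]
  obtain ⟨r, hr⟩ := hcomm.exists_add_pow_prime_eq hp
  rw [hsum, hp0, zero_mul, zero_mul, zero_mul, add_zero] at hr
  show algebraMap C _ (x ^ p) - precompMul A M (x ^ p) = _
  rw [map_pow, map_pow, hr, add_sub_cancel_right]

theorem isDiffOpLE_iff_prod {n : ℕ} {D : C →ₗ[A] M} :
    IsDiffOpLE A C M n D ↔
      ∀ xs : List C, xs.length = n + 1 → (xs.map (opBracketEnd A M)).prod D = 0 := by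
  have foldr_eq_prod (xs : List C) :
      xs.foldr (opBracket A C M) D = (xs.map (opBracketEnd A M)).prod D := by
    induction xs with
    | nil => rfl
    | cons x xs ih => simp [ih]
  simp only [IsDiffOpLE, foldr_eq_prod]

theorem IsDiffOpLE.zero (n : ℕ) : IsDiffOpLE A C M n 0 :=
  isDiffOpLE_iff_prod.mpr fun _ _ => map_zero _

theorem IsDiffOpLE.add {n : ℕ} {D E : C →ₗ[A] M} (hD : IsDiffOpLE A C M n D)
    (hE : IsDiffOpLE A C M n E) : IsDiffOpLE A C M n (D + E) :=
  isDiffOpLE_iff_prod.mpr fun xs hxs => by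
    rw [map_add, isDiffOpLE_iff_prod.mp hD xs hxs, isDiffOpLE_iff_prod.mp hE xs hxs, add_zero]

theorem IsDiffOpLE.map_of_commute {n : ℕ} {D : C →ₗ[A] M} (hD : IsDiffOpLE A C M n D)
    {T : Module.End C (C →ₗ[A] M)} (hT : ∀ x, Commute T (opBracketEnd A M x)) :
    IsDiffOpLE A C M n (T D) :=
  isDiffOpLE_iff_prod.mpr fun xs hxs => by
    have hprod : Commute T (xs.map (opBracketEnd A M)).prod :=
      Commute.list_prod_right _ _ (by simpa using fun x _ => hT x)
    rw [← Module.End.mul_apply, ← hprod.eq, Module.End.mul_apply,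
      isDiffOpLE_iff_prod.mp hD xs hxs, map_zero]

theorem IsDiffOpLE.smul {n : ℕ} {D : C →ₗ[A] M} (hD : IsDiffOpLE A C M n D) (c : C) :
    IsDiffOpLE A C M n (c • D) :=
  hD.map_of_commute (T := algebraMap C _ c) fun _ => Algebra.commute_algebraMap_left _ _

theorem IsDiffOpLE.precompMul {n : ℕ} {D : C →ₗ[A] M} (hD : IsDiffOpLE A C M n D) (y : C) :
    IsDiffOpLE A C M n (precompMul A M y D) :=
  hD.map_of_commute fun x => commute_precompMul_opBracketEnd x y

theorem IsDiffOpLE.pow_opBracketEnd {n j : ℕ} {D : C →ₗ[A] M} (hD : IsDiffOpLE A C M (n + j) D)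
    (x : C) : IsDiffOpLE A C M n ((opBracketEnd A M x ^ j) D) := by
  induction j generalizing D with
  | zero => simpa using hD
  | succ j ih =>
    rw [pow_succ, Module.End.mul_apply]
    exact ih (isDiffOpLE_succ_iff.mp hD x)

theorem IsDiffOpLE.opBracket_of_mem_subalgPow {p : ℕ} [CharP C p] (hp : p.Prime) {x : C}
    (hx : x ∈ subalgPow p A C 1) {m : ℕ} {D : C →ₗ[A] M} (hD : IsDiffOpLE A C M (m + p) D) :
    IsDiffOpLE A C M m (opBracket A C M x D) := by
  rw [← opBracketEnd_apply]
  induction hx using Algebra.adjoin_induction generalizing D with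
  | mem _ hx =>
    obtain ⟨y, rfl⟩ := hx
    rw [pow_one, opBracketEnd_pow_char hp]
    exact hD.pow_opBracketEnd y
  | algebraMap a => simpa [opBracketEnd_algebraMap] using IsDiffOpLE.zero m
  | add x y _ _ ihx ihy =>
    rw [opBracketEnd_add]
    exact (ihx hD).add (ihy hD)
  | mul x y _ _ ihx ihy =>
    rw [opBracketEnd_mul]
    exact ((ihy hD).smul x).add (ihx (hD.precompMul y))

theorem opBracket_lcomp_val (B : Subalgebra A C) (b : B) (D : C →ₗ[A] M) :
    opBracket A B M b (LinearMap.lcomp C M B.val.toLinearMap D) =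
      LinearMap.lcomp C M B.val.toLinearMap (opBracket A C M b D) :=
  rfl

theorem IsDiffOpLE.lcomp_val {q : ℕ} {B : Subalgebra A C}
    (hB : ∀ b ∈ B, ∀ {m : ℕ} {D : C →ₗ[A] M},
      IsDiffOpLE A C M (m + q) D → IsDiffOpLE A C M m (opBracket A C M b D))
    {k : ℕ} {D : C →ₗ[A] M} (hD : IsDiffOpLE A C M (q * k) D) :
    IsDiffOpLE A B M k (LinearMap.lcomp C M B.val.toLinearMap D) := by
  induction k generalizing D with
  | zero =>
    refine isDiffOpLE_zero_iff.mpr fun b => ?_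
    rw [opBracket_lcomp_val, isDiffOpLE_zero_iff.mp hD, map_zero]
  | succ k ih =>
    refine isDiffOpLE_succ_iff.mpr fun b => ?_
    rw [opBracket_lcomp_val]
    exact ih (hB b b.2 hD)

end DiffOps

theorem statement9_general (p : ℕ) (hp : p.Prime) (A C : Type u)
    [CommRing A] [CommRing C] [CharP C p] [Algebra A C]
    (M : Type u) [AddCommGroup M] [Module A M] [Module C M] [IsScalarTower A C M] :
    ∃ res : (C →ₗ[A] M) →ₗ[C] ((subalgPow p A C 1) →ₗ[A] M),
      (∀ (D : C →ₗ[A] M) (lam : subalgPow p A C 1), res D lam = D (lam : C)) ∧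
      ∀ (k : ℕ) (D : C →ₗ[A] M),
        IsDiffOpLE A C M (p * k) D →
          IsDiffOpLE A (subalgPow p A C 1) M k (res D) :=
  ⟨LinearMap.lcomp C M (subalgPow p A C 1).val.toLinearMap, fun _ _ => rfl,
    fun _ _ => IsDiffOpLE.lcomp_val fun _ hb _ _ hD => hD.opBracket_of_mem_subalgPow hp hb⟩

/-- Proposition 4.10: restriction to `C^{[1]}` is a morphism of left
`C`-modules sending differential operators of order `≤ pk` to differential operators
of order `≤ k`. -/
theorem statement9 (p : ℕ) (hp : p.Prime) (A C : Type u)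
    [CommRing A] [CommRing C] [CharP A p] [CharP C p] [Algebra A C]
    (M : Type u) [AddCommGroup M] [Module A M] [Module C M] [IsScalarTower A C M] :
    ∃ res : (C →ₗ[A] M) →ₗ[C] ((subalgPow p A C 1) →ₗ[A] M),
      (∀ (D : C →ₗ[A] M) (lam : subalgPow p A C 1), res D lam = D (lam : C)) ∧
      ∀ (k : ℕ) (D : C →ₗ[A] M),
        IsDiffOpLE A C M (p * k) D →
          IsDiffOpLE A (subalgPow p A C 1) M k (res D) :=
  statement9_general p hp A C M

end PIPaper
end

section
/- Let p be a prime and let A ⊆ C be a finite extension of rings of characteristic p of exponent e := exp(C/A) such that C is generated as an A-algebra by r elements, and let M be a C-module. Then every A-linear map D : C → M is an A-differential operator of order ≤ r·p^e − 1; in particular there exists n ≥ 0 with Diff_A^n(C,M) = Hom_A(C,M). -/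
open scoped TensorProduct

universe u

namespace PIPaper

/-! ### Auxiliary material for Statement 10 -/

section Statement10Aux

private lemma PIP_list_prod_mem_pow {R : Type u} [CommRing R] (I : Ideal R) :
    ∀ xs : List R, (∀ x ∈ xs, x ∈ I) → xs.prod ∈ I ^ xs.length
  | [], _ => by simp [Ideal.one_eq_top]
  | x :: xs, h => by
    rw [List.prod_cons, List.length_cons, pow_succ']
    exact Ideal.mul_mem_mul (h x (by simp))
      (PIP_list_prod_mem_pow I xs fun y hy => h y (List.mem_cons_of_mem _ hy))

private lemma PIP_span_pow_eq_bot {R : Type u} [CommRing R] (q : ℕ) (T : Finset R) :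
    T.Nonempty → (∀ t ∈ T, t ^ q = 0) →
      Ideal.span (T : Set R) ^ (T.card * q) = ⊥ := by
  classical
  induction T using Finset.induction_on with
  | empty => intro h; simp at h
  | @insert a T ha ih =>
    intro _ hT
    have ha0 : a ^ q = 0 := hT a (Finset.mem_insert_self a T)
    have h1 : Ideal.span {a} ^ q = ⊥ := by
      rw [Ideal.span_singleton_pow, ha0]
      simp
    rcases T.eq_empty_or_nonempty with rfl | hTne
    · simpa using h1
    · have h2 := ih hTne fun t ht => hT t (Finset.mem_insert_of_mem ht)
      rw [Finset.card_insert_of_notMem ha, Finset.coe_insert, Ideal.span_insert,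
        show (T.card + 1) * q = q + T.card * q by ring]
      refine le_antisymm (le_trans Ideal.sup_pow_add_le_pow_sup_pow ?_) bot_le
      rw [h1, h2, sup_idem]

variable (A C M : Type u) [CommRing A] [CommRing C] [Algebra A C]
  [AddCommGroup M] [Module A M] [Module C M] [IsScalarTower A C M]

/-- Right multiplication operators on `Hom_A(C,M)`. -/
private noncomputable def PIPRalg : C →ₐ[A] Module.End A (C →ₗ[A] M) where
  toFun x := (LinearMap.mulLeft A x).lcomp A M
  map_one' := by ext D c; simp
  map_mul' x y := by ext D c; simp [mul_assoc, mul_left_comm]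
  map_zero' := by ext D c; simp
  map_add' x y := by ext D c; simp [add_mul]
  commutes' a := by
    ext D c
    show D (algebraMap A C a * c) = (a • D) c
    rw [LinearMap.smul_apply, ← Algebra.smul_def, map_smul]

/-- `Hom_A(C,M)` as a module over `C ⊗[A] C`, as an algebra map into endomorphisms. -/
private noncomputable def PIPPhi : C ⊗[A] C →ₐ[A] Module.End A (C →ₗ[A] M) :=
  Algebra.TensorProduct.lift (Algebra.lsmul A A (C →ₗ[A] M)) (PIPRalg A C M)
    (fun x y => by ext D c; simp [PIPRalg])

private lemma PIPPhi_tmul (x y : C) (D : C →ₗ[A] M) (c : C) :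
    PIPPhi A C M (x ⊗ₜ[A] y) D c = x • D (y * c) := by
  simp [PIPPhi, Algebra.TensorProduct.lift_tmul, PIPRalg, Module.End.mul_apply]

/-- The universal difference `δ x = x ⊗ 1 - 1 ⊗ x`. -/
private noncomputable def PIPdelta (x : C) : C ⊗[A] C := x ⊗ₜ[A] 1 - 1 ⊗ₜ[A] x

private lemma PIP_opBracket_eq (x : C) (E : C →ₗ[A] M) :
    opBracket A C M x E = PIPPhi A C M (PIPdelta A C x) E := by
  ext c
  rw [PIPdelta, map_sub]
  simp only [LinearMap.sub_apply, LinearMap.sub_apply, PIPPhi_tmul, one_mul, one_smul]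
  simp [opBracket, Algebra.smul_def, smul_smul]

private lemma PIP_foldr_eq (xs : List C) (D : C →ₗ[A] M) :
    xs.foldr (opBracket A C M) D = PIPPhi A C M ((xs.map (PIPdelta A C)).prod) D := by
  induction xs with
  | nil => simp
  | cons x xs ih =>
    rw [List.foldr_cons, ih, List.map_cons, List.prod_cons, map_mul,
      Module.End.mul_apply, PIP_opBracket_eq]

end Statement10Aux


/-- Proposition 4.9: for a finite extension of finite exponent
generated by `r` elements as an `A`-algebra, every `A`-linear map `C → M` is a
differential operator of order `≤ r·p^e − 1`, where `e = exp(C/A)`; in particular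
`Diff_A^n(C,M) = Hom_A(C,M)` for some `n`. -/
theorem statement10 (p : ℕ) (hp : p.Prime) (A C : Type u)
    [CommRing A] [CommRing C] [CharP A p] [CharP C p] [Algebra A C]
    (hinj : Function.Injective (algebraMap A C))
    (hfin : Module.Finite A C) (hexp : HasFinExp p A C)
    (r : ℕ) (s : Finset C) (hcard : s.card = r)
    (hgen : Algebra.adjoin A (s : Set C) = ⊤)
    (M : Type u) [AddCommGroup M] [Module A M] [Module C M] [IsScalarTower A C M] :
    (∀ D : C →ₗ[A] M, IsDiffOpLE A C M (r * p ^ ringExp p A C - 1) D) ∧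
    ∃ n : ℕ, ∀ D : C →ₗ[A] M, IsDiffOpLE A C M n D := by
  classical
  haveI : Fact p.Prime := ⟨hp⟩
  set q : ℕ := p ^ ringExp p A C with hqdef
  have hq1 : 1 ≤ q := Nat.one_le_iff_ne_zero.mpr (pow_ne_zero _ hp.pos.ne')
  have hle : HasExpLE p A C (ringExp p A C) := Nat.sInf_mem hexp
  -- `C ⊗[A] C` has characteristic `p`
  haveI : CharP (C ⊗[A] C) p := by
    have hretr : Function.LeftInverse (Algebra.TensorProduct.lmul' (S := C) A)
        (algebraMap C (C ⊗[A] C)) := fun x => by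
      simp [Algebra.TensorProduct.algebraMap_apply]
    exact charP_of_injective_ringHom
      (f := (algebraMap C (C ⊗[A] C))) hretr.injective p
  -- the ideal generated by the `δ g`, `g ∈ s`
  set I : Ideal (C ⊗[A] C) := Ideal.span ((s.image (PIPdelta A C) : Finset (C ⊗[A] C)) : Set (C ⊗[A] C))
    with hIdef
  -- every `δ x` lies in `I`
  have hδmem : ∀ x : C, PIPdelta A C x ∈ I := by
    have hsub : ∀ g ∈ s, PIPdelta A C g ∈ I := fun g hg =>
      Ideal.subset_span (by exact_mod_cast Finset.mem_image_of_mem _ hg)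
    let S' : Subalgebra A C :=
      { carrier := {x : C | PIPdelta A C x ∈ I}
        one_mem' := by
          show PIPdelta A C 1 ∈ I
          rw [show PIPdelta A C 1 = 0 by rw [PIPdelta, sub_self]]
          exact zero_mem I
        zero_mem' := by
          show PIPdelta A C 0 ∈ I
          rw [show PIPdelta A C 0 = 0 by
            rw [PIPdelta, TensorProduct.zero_tmul, TensorProduct.tmul_zero, sub_self]]
          exact zero_mem I
        mul_mem' := by
          intro x y hx hy
          have key : PIPdelta A C (x * y)
              = (x ⊗ₜ[A] 1) * PIPdelta A C y + (1 ⊗ₜ[A] y) * PIPdelta A C x := by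
            simp only [PIPdelta, mul_sub, Algebra.TensorProduct.tmul_mul_tmul,
              mul_one, one_mul]
            ring
          show PIPdelta A C (x * y) ∈ I
          rw [key]
          exact add_mem (Ideal.mul_mem_left _ _ hy) (Ideal.mul_mem_left _ _ hx)
        add_mem' := by
          intro x y hx hy
          have key : PIPdelta A C (x + y) = PIPdelta A C x + PIPdelta A C y := by
            simp only [PIPdelta, TensorProduct.add_tmul, TensorProduct.tmul_add]
            ring
          show PIPdelta A C (x + y) ∈ I
          rw [key]
          exact add_mem hx hy
        algebraMap_mem' := by
          intro a
          have key : PIPdelta A C (algebraMap A C a) = 0 := by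
            rw [PIPdelta, sub_eq_zero, Algebra.algebraMap_eq_smul_one,
              ← TensorProduct.smul_tmul]
          show PIPdelta A C (algebraMap A C a) ∈ I
          rw [key]
          exact zero_mem I }
    intro x
    have hx : x ∈ S' := by
      have : (⊤ : Subalgebra A C) ≤ S' := by
        rw [← hgen]
        exact Algebra.adjoin_le hsub
      exact this trivial
    exact hx
  -- each generator `δ g` is nilpotent of order `q`
  have hnil : ∀ t ∈ s.image (PIPdelta A C), t ^ q = 0 := by
    intro t ht
    rcases Finset.mem_image.mp ht with ⟨g, hg, rfl⟩
    obtain ⟨a, ha⟩ := hle g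
    have : PIPdelta A C g ^ q = PIPdelta A C (g ^ q) := by
      rw [PIPdelta, PIPdelta, hqdef, sub_pow_char_pow,
        Algebra.TensorProduct.tmul_pow, Algebra.TensorProduct.tmul_pow, one_pow]
    rw [this, ← ha, PIPdelta, sub_eq_zero, Algebra.algebraMap_eq_smul_one,
      ← TensorProduct.smul_tmul]
  -- the main statement
  have main : ∀ D : C →ₗ[A] M, IsDiffOpLE A C M (r * q - 1) D := by
    intro D xs hlen
    rw [PIP_foldr_eq]
    have hmem : ∀ y ∈ xs.map (PIPdelta A C), y ∈ I := by
      intro y hy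
      rcases List.mem_map.mp hy with ⟨x, _, rfl⟩
      exact hδmem x
    rcases Nat.eq_zero_or_pos r with rfl | hr
    · -- r = 0 : s = ∅, so I = ⊥ and every δ x = 0
      have hsempty : s = ∅ := Finset.card_eq_zero.mp hcard
      have hIbot : I = ⊥ := by rw [hIdef, hsempty]; simp
      obtain ⟨x, xs', rfl⟩ : ∃ x xs', xs = x :: xs' := by
        cases xs with
        | nil => simp at hlen
        | cons x xs' => exact ⟨x, xs', rfl⟩
      have h0 : PIPdelta A C x = 0 := by
        have := hδmem x
        rwa [hIbot, Ideal.mem_bot] at this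
      rw [List.map_cons, List.prod_cons, h0, zero_mul, map_zero]
      rfl
    · -- r ≥ 1
      have hlen' : xs.length = r * q := by
        rw [hlen]
        have : 1 ≤ r * q := Nat.one_le_iff_ne_zero.mpr
          (Nat.mul_ne_zero hr.ne' (by omega))
        omega
      have hprod : (xs.map (PIPdelta A C)).prod ∈ I ^ (r * q) := by
        have := PIP_list_prod_mem_pow I (xs.map (PIPdelta A C)) hmem
        rwa [List.length_map, hlen'] at this
      have hsne : s.Nonempty := Finset.card_pos.mp (by omega)
      have himne : (s.image (PIPdelta A C)).Nonempty := hsne.image _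
      have hbot : I ^ (r * q) ≤ ⊥ := by
        have hc : (s.image (PIPdelta A C)).card ≤ r := hcard ▸ Finset.card_image_le
        have h1 : I ^ (r * q) ≤ I ^ ((s.image (PIPdelta A C)).card * q) :=
          Ideal.pow_le_pow_right (Nat.mul_le_mul_right q hc)
        have h2 := PIP_span_pow_eq_bot q (s.image (PIPdelta A C)) himne hnil
        rw [hIdef]
        rw [hIdef] at h1
        exact h1.trans (le_of_eq h2)
      have : (xs.map (PIPdelta A C)).prod = 0 := Ideal.mem_bot.mp (hbot hprod)
      rw [this, map_zero]
      rfl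
  exact ⟨main, ⟨r * q - 1, main⟩⟩


end PIPaper
end

section
/- Let p be a prime and let A ⊆ C be a finite extension of rings of characteristic p having finite exponent, such that C is a finite projective A-module. If Der_A(C) = 0, then A = C. -/
open scoped TensorProduct

universe u

namespace PIPaper

/-!
Let `I ⊆ C ⊗[A] C` be the kernel of multiplication, generated by the elements `1 ⊗ x - x ⊗ 1`.
Since `C ⊗[A] C` is a projective `C`-module, its elements are separated by `C`-linear functionals
to `C`, so every `A`-derivation `C → C ⊗[A] C` vanishes along with `Der_A(C)`. In characteristic
`p` the generators satisfy `(1 ⊗ x - x ⊗ 1) ^ p ^ e = 1 ⊗ x ^ p ^ e - x ^ p ^ e ⊗ 1 = 0`, so the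
finitely generated ideal `I` is nilpotent. If `I ^ (m + 2) = 0` and `v ∈ I ^ m`, then
`x ↦ v * (1 ⊗ x - x ⊗ 1)` is a derivation (the defect of the Leibniz rule lies in `I ^ (m + 2)`),
hence zero, so `I ^ (m + 1) = 0`; descending, `I = 0`, i.e. `x ⊗ 1 = 1 ⊗ x` for every `x`.
Finally `C` is faithfully flat over `A` (flat, finite and with `A → C` injective), and by faithfully
flat descent the elements `x` with `x ⊗ 1 = 1 ⊗ x` are exactly those of `A`.
-/

section Derivations

variable {A C : Type*} [CommRing A] [CommRing C] [Algebra A C]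

lemma derivation_eq_zero_of_forall_dual_eq_zero {M : Type*} [AddCommGroup M] [Module A M]
    [Module C M] [IsScalarTower A C M] (hder : ∀ D : Derivation A C C, D = 0)
    (hM : ∀ m : M, (∀ φ : Module.Dual C M, φ m = 0) → m = 0) (D : Derivation A C M) :
    D = 0 := by
  ext x
  refine hM _ fun φ => ?_
  simpa using congr($(hder (φ.compDer D)) x)

lemma derivation_tensorProduct_eq_zero [Module.Projective A C]
    (hder : ∀ D : Derivation A C C, D = 0) (D : Derivation A C (C ⊗[A] C)) : D = 0 :=
  derivation_eq_zero_of_forall_dual_eq_zero hder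
    (fun _ => (Module.forall_dual_apply_eq_zero_iff C _).mp) D

end Derivations

section KaehlerIdeal

variable {A C : Type*} [CommRing A] [CommRing C] [Algebra A C]

local notation "I" => KaehlerDifferential.ideal A C

lemma one_tmul_sub_tmul_one_mul (x y : C) :
    (1 : C) ⊗ₜ[A] (x * y) - (x * y) ⊗ₜ[A] 1 =
      x • ((1 : C) ⊗ₜ[A] y - y ⊗ₜ[A] 1) + y • ((1 : C) ⊗ₜ[A] x - x ⊗ₜ[A] 1) +
        ((1 : C) ⊗ₜ[A] x - x ⊗ₜ[A] 1) * ((1 : C) ⊗ₜ[A] y - y ⊗ₜ[A] 1) := by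
  simp only [smul_sub, TensorProduct.smul_tmul', smul_eq_mul, mul_sub, sub_mul,
    Algebra.TensorProduct.tmul_mul_tmul, mul_one, one_mul, mul_comm y x]
  abel

lemma mul_one_tmul_sub_tmul_one_eq_zero (hD : ∀ D : Derivation A C (C ⊗[A] C), D = 0)
    {m : ℕ} (hm : I ^ (m + 2) = ⊥) {v : C ⊗[A] C} (hv : v ∈ I ^ m) (x : C) :
    v * ((1 : C) ⊗ₜ[A] x - x ⊗ₜ[A] 1) = 0 := by
  have hmem (x : C) : (1 : C) ⊗ₜ[A] x - x ⊗ₜ[A] 1 ∈ I :=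
    KaehlerDifferential.one_smul_sub_smul_one_mem_ideal A x
  have hquad (x y : C) :
      v * ((1 : C) ⊗ₜ[A] x - x ⊗ₜ[A] 1) * ((1 : C) ⊗ₜ[A] y - y ⊗ₜ[A] 1) = 0 := by
    rw [← Submodule.mem_bot (C ⊗[A] C), ← hm, pow_succ, pow_succ]
    exact Ideal.mul_mem_mul (Ideal.mul_mem_mul hv (hmem x)) (hmem y)
  let d : C →ₗ[A] C ⊗[A] C := LinearMap.mulLeft A v ∘ₗ
    (Algebra.TensorProduct.includeRight.toLinearMap - Algebra.TensorProduct.includeLeft.toLinearMap)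
  have hd (x : C) : d x = v * ((1 : C) ⊗ₜ[A] x - x ⊗ₜ[A] 1) := rfl
  let D : Derivation A C (C ⊗[A] C) := Derivation.mk' d fun x y => by
    rw [hd, hd, hd, one_tmul_sub_tmul_one_mul, mul_add, mul_add, mul_smul_comm, mul_smul_comm,
      ← mul_assoc, hquad, add_zero]
  simpa [D, hd] using congr($(hD D) x)

lemma kaehlerIdeal_pow_succ_eq_bot (hD : ∀ D : Derivation A C (C ⊗[A] C), D = 0) {m : ℕ}
    (hm : I ^ (m + 2) = ⊥) : I ^ (m + 1) = ⊥ := by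
  rw [pow_succ, eq_bot_iff, Ideal.mul_le]
  intro v hv w hw
  rw [← KaehlerDifferential.span_range_eq_ideal] at hw
  induction hw using Submodule.span_induction with
  | mem w hw =>
    obtain ⟨x, rfl⟩ := hw
    exact mul_one_tmul_sub_tmul_one_eq_zero hD hm hv x
  | zero => rw [mul_zero]; exact Submodule.zero_mem _
  | add w w' _ _ h h' => rw [mul_add]; exact Submodule.add_mem _ h h'
  | smul c w _ h => rw [mul_smul_comm]; exact Submodule.smul_mem _ c h

lemma kaehlerIdeal_eq_bot (hD : ∀ D : Derivation A C (C ⊗[A] C), D = 0) (hI : IsNilpotent I) :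
    I = ⊥ := by
  obtain ⟨n, hn⟩ := hI
  suffices ∀ k, I ^ (k + 1) = ⊥ → I = ⊥ from
    this n (le_bot_iff.mp ((Ideal.pow_le_pow_right n.le_succ).trans hn.le))
  intro k
  induction k with
  | zero => simp
  | succ k ih => exact fun hk => ih (kaehlerIdeal_pow_succ_eq_bot hD hk)

lemma isNilpotent_one_tmul_sub_tmul_one {p : ℕ} (hp : p.Prime) [CharP C p] {e : ℕ} {x : C}
    (hx : x ^ p ^ e ∈ (algebraMap A C).range) :
    IsNilpotent ((1 : C) ⊗ₜ[A] x - x ⊗ₜ[A] 1) := by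
  nontriviality C ⊗[A] C
  have : CharP (C ⊗[A] C) p := (CharP.charP_iff_prime_eq_zero hp).mpr <| by
    rw [← map_natCast (algebraMap C (C ⊗[A] C)), CharP.cast_eq_zero, map_zero]
  have : Fact p.Prime := ⟨hp⟩
  obtain ⟨a, ha⟩ := hx
  refine ⟨p ^ e, ?_⟩
  rw [sub_pow_char_pow, Algebra.TensorProduct.tmul_pow, Algebra.TensorProduct.tmul_pow, one_pow,
    ← ha, Algebra.algebraMap_eq_smul_one, TensorProduct.smul_tmul, sub_self]

lemma isNilpotent_kaehlerIdeal [Module.Finite A C] {p : ℕ} (hp : p.Prime) [CharP C p]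
    (hpow : ∀ x : C, ∃ e, x ^ p ^ e ∈ (algebraMap A C).range) : IsNilpotent I := by
  rw [(KaehlerDifferential.ideal_fg A C).isNilpotent_iff_le_nilradical,
    ← KaehlerDifferential.span_range_eq_ideal, Ideal.span_le]
  rintro _ ⟨x, rfl⟩
  obtain ⟨e, he⟩ := hpow x
  exact isNilpotent_one_tmul_sub_tmul_one hp he

lemma algebraMap_surjective_of_kaehlerIdeal_eq_bot [Module.FaithfullyFlat A C] (hI : I = ⊥) :
    Function.Surjective (algebraMap A C) := by
  intro x
  refine (Algebra.IsEffective.of_faithfullyFlat A C x).mp ?_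
  have hx := KaehlerDifferential.one_smul_sub_smul_one_mem_ideal A x
  rw [hI, Submodule.mem_bot, sub_eq_zero] at hx
  rw [Algebra.TensorProduct.includeLeftSubRight_apply, hx, sub_self]

end KaehlerIdeal

theorem statement16_general (p : ℕ) (hp : p.Prime) (A C : Type u)
    [CommRing A] [CommRing C] [CharP C p] [Algebra A C]
    (hinj : Function.Injective (algebraMap A C))
    (hfin : Module.Finite A C) (hexp : HasFinExp p A C)
    (hproj : Module.Projective A C)
    (hder : ∀ D : Derivation A C C, D = 0) :
    Function.Bijective (algebraMap A C) := by
  obtain ⟨e, he⟩ := hexp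
  have : Module.FaithfullyFlat A C := .of_comap_surjective <|
    PrimeSpectrum.comap_surjective_iff_injective_of_finite.mpr hinj
  refine ⟨hinj, algebraMap_surjective_of_kaehlerIdeal_eq_bot ?_⟩
  exact kaehlerIdeal_eq_bot (derivation_tensorProduct_eq_zero hder)
    (isNilpotent_kaehlerIdeal hp fun x => ⟨e, he x⟩)

/-- Lemma 3.18: a finite projective extension of finite exponent with
no nonzero `A`-derivations satisfies `A = C`. -/
theorem statement16 (p : ℕ) (hp : p.Prime) (A C : Type u)
    [CommRing A] [CommRing C] [CharP A p] [CharP C p] [Algebra A C]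
    (hinj : Function.Injective (algebraMap A C))
    (hfin : Module.Finite A C) (hexp : HasFinExp p A C)
    (hproj : Module.Projective A C)
    (hder : ∀ D : Derivation A C C, D = 0) :
    Function.Bijective (algebraMap A C) :=
  statement16_general p hp A C hinj hfin hexp hproj hder

end PIPaper
end

section
/- Let p be a prime and let C be a ring of characteristic p. Suppose x_1,…,x_n ∈ C and ∂_1,…,∂_n are derivations of C satisfying ∂_i(x_j) = δ_{ij}, [∂_i,∂_j] = ∂_i∘∂_j − ∂_j∘∂_i = 0, and ∂_i^p = 0 (p-fold composition) for all i,j ∈ {1,…,n}. Let A := ∩_{i=1}^n ker(∂_i). Then A ⊆ C has exponent one, x_1,…,x_n is a p-basis for C over A, the ∂_i are the partial derivatives associated to this p-basis, and ∂_1,…,∂_n form a basis of Der_A(C) as a C-module. -/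
open scoped TensorProduct

universe u

/-!
Since `∂ᵢ xᵢ = 1` and `∂ᵢ^p = 0`, the operator `∂ᵢ^r / r!` (`r < p`) reads off the top coefficient
in `xᵢ`: an element `c` with `∂ᵢ^(r+1) c = 0` is `xᵢ^r a + c'` with `∂ᵢ a = 0` and `∂ᵢ^r c' = 0`,
and `a` stays in the kernel of every `∂ⱼ` that kills `c` because the `∂ⱼ` commute. Induction on
`r` and on the set of variables writes every element of `C` as an `A`-combination of reduced
monomials. For independence, apply `∂^γ` with `γ` maximal among the exponents carrying a nonzero
coefficient: only the `γ`-term survives, as `γ!` times its coefficient, and `γ!` is a unit since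
all `γᵢ < p`. Finally, an `A`-derivation `D` agrees with `∑ D(xᵢ) ∂ᵢ` on the generators `xᵢ` of
`C` over `A`.
-/

lemma exists_natCast_mul_eq_one {C : Type*} [CommRing C] {p : ℕ} (hp : p.Prime) [CharP C p]
    {N : ℕ} (hN : ¬ p ∣ N) : ∃ m : ℕ, (m : C) * N = 1 := by
  have := Fact.mk hp
  have hN' : (N : ZMod p) ≠ 0 := by rwa [Ne, ZMod.natCast_eq_zero_iff]
  refine ⟨((N : ZMod p)⁻¹).val, ?_⟩
  simpa [ZMod.natCast_val] using congrArg (ZMod.castHom (dvd_refl p) C) (inv_mul_cancel₀ hN')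

namespace Derivation

variable {R A : Type*} [CommRing R] [CommRing A] [Algebra R A] (D : Derivation R A A)

lemma apply_pow_char (p : ℕ) [CharP A p] (a : A) : D (a ^ p) = 0 := by
  rw [leibniz_pow, ← Nat.cast_smul_eq_nsmul A, CharP.cast_eq_zero, zero_smul]

lemma iterate_mul_of_apply_eq_zero {u : A} (hu : D u = 0) (k : ℕ) (v : A) :
    (⇑D)^[k] (u * v) = u * (⇑D)^[k] v := by
  induction k generalizing v with
  | zero => rfl
  | succ k ih =>
    rw [Function.iterate_succ_apply, Function.iterate_succ_apply, leibniz, hu, smul_zero,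
      add_zero, smul_eq_mul, ih]

lemma iterate_pow_of_apply_eq_one {y : A} (hy : D y = 1) (k m : ℕ) :
    (⇑D)^[k] (y ^ m) = (m.descFactorial k : A) * y ^ (m - k) := by
  induction k with
  | zero => simp
  | succ k ih =>
    rw [Function.iterate_succ_apply', ih, leibniz, map_natCast, smul_zero, add_zero,
      leibniz_pow, hy, Nat.descFactorial_succ, Nat.sub_sub]
    simp only [smul_eq_mul, nsmul_eq_mul, mul_one, Nat.cast_mul]
    ring

lemma sum_apply {ι : Type*} (s : Finset ι) (D : ι → Derivation R A A) (a : A) :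
    (∑ i ∈ s, D i) a = ∑ i ∈ s, D i a := by
  rw [← coeFnAddMonoidHom_apply, map_sum, Finset.sum_apply]
  rfl

def overSubalgebra (B : Subalgebra R A) (hB : ∀ b ∈ B, D b = 0) : Derivation B A A where
  toFun := D
  map_add' := D.map_add
  map_smul' b a := by
    rw [Subalgebra.smul_def, smul_eq_mul, leibniz, hB b b.2, smul_zero, add_zero]
    rfl
  map_one_eq_zero' := D.map_one_eq_zero
  leibniz' := D.leibniz

@[simp] lemma overSubalgebra_apply (B : Subalgebra R A) (hB : ∀ b ∈ B, D b = 0) (a : A) :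
    D.overSubalgebra B hB a = D a := rfl

end Derivation

lemma Algebra.adjoin_range_eq_top_of_span_monomials {R S : Type*} [CommRing R] [CommRing S]
    [Algebra R S] {n p : ℕ} (x : Fin n → S)
    (h : Submodule.span R (Set.range fun α : Fin n → Fin p => ∏ i, x i ^ (α i : ℕ)) = ⊤) :
    Algebra.adjoin R (Set.range x) = ⊤ := by
  refine Algebra.eq_top_iff.mpr fun c => ?_
  have hc : c ∈ Submodule.span R (Set.range fun α : Fin n → Fin p => ∏ i, x i ^ (α i : ℕ)) :=
    h ▸ Submodule.mem_top
  have hle : Submodule.span R (Set.range fun α : Fin n → Fin p => ∏ i, x i ^ (α i : ℕ)) ≤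
      Subalgebra.toSubmodule (Algebra.adjoin R (Set.range x)) := by
    refine Submodule.span_le.mpr ?_
    rintro _ ⟨α, rfl⟩
    exact Subalgebra.prod_mem _ fun i _ =>
      Subalgebra.pow_mem _ (Algebra.subset_adjoin (Set.mem_range_self i)) _
  exact hle hc

namespace PIPaper

open Finset

variable {C : Type u} [CommRing C] {n : ℕ} (d : Fin n → Derivation ℤ C C) (x : Fin n → C)

def iterDerivs (l : List (Fin n)) (γ : Fin n → ℕ) : Module.End ℤ C :=
  (l.map fun i => (d i).toLinearMap ^ γ i).prod

lemma iterDerivs_cons (i : Fin n) (l : List (Fin n)) (γ : Fin n → ℕ) (c : C) :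
    iterDerivs d (i :: l) γ c = (⇑(d i))^[γ i] (iterDerivs d l γ c) := by
  rw [iterDerivs, List.map_cons, List.prod_cons, Module.End.mul_apply, Module.End.pow_apply]
  rfl

lemma iterDerivs_mul_of_apply_eq_zero {a : C} (ha : ∀ i, d i a = 0) (l : List (Fin n))
    (γ : Fin n → ℕ) (c : C) : iterDerivs d l γ (a * c) = a * iterDerivs d l γ c := by
  induction l with
  | nil => rfl
  | cons i l ih =>
    rw [iterDerivs_cons, iterDerivs_cons, ih, (d i).iterate_mul_of_apply_eq_zero (ha i)]

def monomialSpan (p : ℕ) (s : Finset (Fin n)) : Submodule (kerDer C d) C :=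
  Submodule.span (kerDer C d) (Set.range fun α : Fin n → Fin p => ∏ j ∈ s, x j ^ (α j : ℕ))

lemma pow_mul_mem_monomialSpan_insert {p : ℕ} {s : Finset (Fin n)} {i : Fin n} (hi : i ∉ s)
    {r : ℕ} (hr : r < p) {a : C} (ha : a ∈ monomialSpan d x p s) :
    x i ^ r * a ∈ monomialSpan d x p (insert i s) := by
  suffices monomialSpan d x p s ≤
      (monomialSpan d x p (insert i s)).comap (LinearMap.mulLeft (kerDer C d) (x i ^ r)) from
    this ha
  refine Submodule.span_le.mpr ?_
  rintro _ ⟨α, rfl⟩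
  refine Submodule.subset_span ⟨Function.update α i ⟨r, hr⟩, ?_⟩
  simp only [LinearMap.mulLeft_apply, prod_insert hi, Function.update_self]
  congr 1
  exact prod_congr rfl fun j hj => by rw [Function.update_of_ne (ne_of_mem_of_not_mem hj hi)]

section Monomials

variable (hdx : ∀ i j, d i (x j) = if i = j then 1 else 0)
include hdx

lemma iterate_apply_monomial (i : Fin n) (k : ℕ) (β : Fin n → ℕ) :
    (⇑(d i))^[k] (∏ j, x j ^ β j) =
      ((β i).descFactorial k : C) * ∏ j, x j ^ (β j - if j = i then k else 0) := by
  have hrest : d i (∏ j ∈ univ.erase i, x j ^ β j) = 0 := by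
    refine Finset.prod_induction _ (fun c => d i c = 0) (fun a b ha hb => ?_) (by simp)
      fun j hj => ?_
    · rw [Derivation.leibniz, ha, hb, smul_zero, smul_zero, add_zero]
    · rw [Derivation.leibniz_pow, hdx, if_neg (Finset.ne_of_mem_erase hj).symm, smul_zero,
        smul_zero]
  have hrest' : ∏ j ∈ univ.erase i, x j ^ (β j - if j = i then k else 0) =
      ∏ j ∈ univ.erase i, x j ^ β j :=
    prod_congr rfl fun j hj => by rw [if_neg (Finset.ne_of_mem_erase hj), Nat.sub_zero]
  rw [← prod_erase_mul _ _ (mem_univ i), ← prod_erase_mul _ _ (mem_univ i), hrest', if_pos rfl,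
    (d i).iterate_mul_of_apply_eq_zero hrest, (d i).iterate_pow_of_apply_eq_one (by simp [hdx])]
  ring

lemma iterDerivs_monomial {l : List (Fin n)} (hl : l.Nodup) (γ β : Fin n → ℕ) :
    iterDerivs d l γ (∏ j, x j ^ β j) =
      ((l.map fun i => (β i).descFactorial (γ i)).prod : C) *
        ∏ j, x j ^ (β j - if j ∈ l then γ j else 0) := by
  induction l with
  | nil => simp [iterDerivs]
  | cons i l ih =>
    obtain ⟨hil, hl⟩ := List.nodup_cons.mp hl
    have hexp : ∀ j, (β j - if j ∈ l then γ j else 0) - (if j = i then γ i else 0) =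
        β j - if j ∈ i :: l then γ j else 0 := by
      intro j
      by_cases hj : j = i
      · subst hj; simp [hil]
      · simp [hj]
    rw [iterDerivs_cons, ih hl, (d i).iterate_mul_of_apply_eq_zero ((d i).map_natCast _),
      iterate_apply_monomial d x hdx, if_neg hil, Nat.sub_zero]
    simp only [hexp, List.map_cons, List.prod_cons, Nat.cast_mul]
    ring

lemma iterDerivs_finRange_monomial (γ β : Fin n → ℕ) :
    iterDerivs d (List.finRange n) γ (∏ j, x j ^ β j) =
      ((∏ i, (β i).descFactorial (γ i) : ℕ) : C) * ∏ j, x j ^ (β j - γ j) := by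
  rw [iterDerivs_monomial d x hdx (List.nodup_finRange n)]
  simp [Fin.prod_univ_def]

lemma linearIndependent_monomials {p : ℕ} (hp : p.Prime) [CharP C p] :
    LinearIndependent (kerDer C d) (fun α : Fin n → Fin p => ∏ i, x i ^ (α i : ℕ)) := by
  rw [Fintype.linearIndependent_iff]
  intro g hg
  by_contra! hne
  obtain ⟨γ, hγ⟩ := (Set.toFinite {α | g α ≠ 0}).exists_maximal hne
  have hterm : ∀ α, iterDerivs d (List.finRange n) (fun i => γ i) (g α • ∏ i, x i ^ (α i : ℕ)) =
      if α = γ then (g γ : C) * (∏ i, (γ i : ℕ).factorial : ℕ) else 0 := by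
    intro α
    rw [Subalgebra.smul_def, smul_eq_mul, iterDerivs_mul_of_apply_eq_zero d (g α).2,
      iterDerivs_finRange_monomial d x hdx]
    split_ifs with h
    · simp [h, Nat.descFactorial_self]
    by_cases hgα : g α = 0
    · simp [hgα]
    obtain ⟨i, hi⟩ : ∃ i, (α i : ℕ) < γ i := by
      by_contra! hle
      exact h (le_antisymm (hγ.2 hgα fun i => hle i) fun i => hle i)
    rw [prod_eq_zero (mem_univ i) (Nat.descFactorial_eq_zero_iff_lt.mpr hi)]
    simp
  have hγ0 : (g γ : C) * (∏ i, (γ i : ℕ).factorial : ℕ) = 0 := by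
    simpa [hterm] using congrArg (iterDerivs d (List.finRange n) fun i => γ i) hg
  have hN : ¬ p ∣ ∏ i, (γ i : ℕ).factorial := by
    simp [(Nat.Prime.prime hp).dvd_finsetProd_iff, hp.dvd_factorial]
  obtain ⟨m, hm⟩ := exists_natCast_mul_eq_one (C := C) hp hN
  apply hγ.1
  ext
  calc (g γ : C) = m * ((g γ : C) * (∏ i, (γ i : ℕ).factorial : ℕ)) := by
        rw [mul_left_comm, hm, mul_one]
    _ = 0 := by rw [hγ0, mul_zero]

lemma mem_monomialSpan_insert {p : ℕ} (hp : p.Prime) [CharP C p]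
    (hcomm : ∀ i j (c : C), d i (d j c) = d j (d i c)) {s : Finset (Fin n)} {i : Fin n}
    (hi : i ∉ s) (ih : ∀ c, (∀ j ∉ s, d j c = 0) → c ∈ monomialSpan d x p s) (r : ℕ)
    (hrp : r ≤ p) (c : C) (hc : ∀ j ∉ insert i s, d j c = 0) (hcr : (⇑(d i))^[r] c = 0) :
    c ∈ monomialSpan d x p (insert i s) := by
  induction r generalizing c with
  | zero => rw [show c = 0 from hcr]; exact zero_mem _
  | succ r ihr =>
    obtain ⟨m, hm⟩ := exists_natCast_mul_eq_one (C := C) hp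
      (N := r.factorial) (by rw [hp.dvd_factorial]; omega)
    -- `a` is the leading coefficient of `c` as a polynomial in `x i`, of degree at most `r`.
    set a := (m : C) * (⇑(d i))^[r] c
    have ha : ∀ j ∉ s, d j a = 0 := by
      intro j hj
      have hda : d j a = m * d j ((⇑(d i))^[r] c) := by simp [a, Derivation.leibniz]
      rw [hda]
      by_cases hji : j = i
      · rw [hji, ← Function.iterate_succ_apply' (d i), hcr, mul_zero]
      · rw [← Function.Commute.iterate_left (fun c => hcomm i j c) r c,
          hc j (by simp [hji, hj]), iterate_map_zero, mul_zero]
    have hxa : (⇑(d i))^[r] (x i ^ r * a) = (⇑(d i))^[r] c := by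
      rw [mul_comm, (d i).iterate_mul_of_apply_eq_zero (ha i hi),
        (d i).iterate_pow_of_apply_eq_one (by simp [hdx]), Nat.descFactorial_self, Nat.sub_self,
        pow_zero, mul_one, mul_right_comm, hm, one_mul]
    have hrest : c - x i ^ r * a ∈ monomialSpan d x p (insert i s) := by
      refine ihr (by omega) _ (fun j hj => ?_) (by rw [iterate_map_sub, hxa, sub_self])
      have hji : j ≠ i := fun h => hj (h ▸ mem_insert_self i s)
      rw [map_sub, hc j hj, Derivation.leibniz, ha j fun h => hj (mem_insert_of_mem h),
        Derivation.leibniz_pow, hdx, if_neg hji]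
      simp
    rw [← sub_add_cancel c (x i ^ r * a)]
    exact add_mem hrest (pow_mul_mem_monomialSpan_insert d x hi (by omega) (ih a ha))

lemma mem_monomialSpan {p : ℕ} (hp : p.Prime) [CharP C p]
    (hcomm : ∀ i j (c : C), d i (d j c) = d j (d i c))
    (hpow : ∀ i (c : C), (⇑(d i))^[p] c = 0) (s : Finset (Fin n)) (c : C)
    (hc : ∀ j ∉ s, d j c = 0) : c ∈ monomialSpan d x p s := by
  induction s using Finset.induction_on generalizing c with
  | empty =>
    have hc : c = (⟨c, fun j => hc j (notMem_empty j)⟩ : kerDer C d) • ∏ j ∈ ∅, x j ^ 0 := by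
      simp [Subalgebra.smul_def]
    rw [hc]
    exact Submodule.smul_mem _ _ (Submodule.subset_span ⟨fun _ => ⟨0, hp.pos⟩, rfl⟩)
  | insert i s hi ih =>
    exact mem_monomialSpan_insert d x hdx hp hcomm hi ih p le_rfl c hc (hpow i c)

lemma span_monomials_eq_top {p : ℕ} (hp : p.Prime) [CharP C p]
    (hcomm : ∀ i j (c : C), d i (d j c) = d j (d i c))
    (hpow : ∀ i (c : C), (⇑(d i))^[p] c = 0) :
    Submodule.span (kerDer C d) (Set.range fun α : Fin n → Fin p => ∏ i, x i ^ (α i : ℕ)) = ⊤ :=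
  eq_top_iff.mpr fun c _ => mem_monomialSpan d x hdx hp hcomm hpow univ c (by simp)

lemma existsUnique_derivation_eq_sum (hx : Algebra.adjoin (kerDer C d) (Set.range x) = ⊤)
    (D : Derivation (kerDer C d) C C) :
    ∃! c : Fin n → C, ∀ y, D y = ∑ i, c i * d i y := by
  have hsum : ∀ (c : Fin n → C) j, ∑ i, c i * d i (x j) = c j := by simp [hdx]
  refine ⟨fun i => D (x i), fun y => ?_, fun c hc => funext fun j => by rw [hc, hsum]⟩
  let E : Derivation (kerDer C d) C C :=
    ∑ i, D (x i) • (d i).overSubalgebra (kerDer C d) fun _ hb => hb i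
  have hE : ∀ y, E y = ∑ i, D (x i) * d i y := by simp [E, Derivation.sum_apply]
  have hDE : D = E :=
    Derivation.ext_of_adjoin_eq_top _ hx (by rintro _ ⟨j, rfl⟩; rw [hE, hsum])
  rw [DFunLike.congr_fun hDE y, hE]

end Monomials

/-- Lemma 3.17, after Jacobson/Hochschild/Yuan: commuting derivations
`∂_i` with `∂_i^p = 0` and `∂_i x_j = δ_{ij}` make `x_1,…,x_n` a `p`-basis of `C` over
`A = ∩ ker ∂_i`, with the `∂_i` the associated partial derivatives, forming a `C`-basis
of `Der_A(C)`. -/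
theorem statement17 (p : ℕ) (hp : p.Prime) (C : Type u) [CommRing C] [CharP C p]
    (n : ℕ) (x : Fin n → C) (d : Fin n → Derivation ℤ C C)
    (hdx : ∀ i j, d i (x j) = if i = j then 1 else 0)
    (hcomm : ∀ i j (c : C), d i (d j c) = d j (d i c))
    (hpow : ∀ i (c : C), (⇑(d i))^[p] c = 0) :
    (∀ c : C, c ^ p ∈ kerDer C d) ∧
    IsPBasis p (kerDer C d) C x ∧
    (∀ i (α : Fin n → Fin p),
      d i (∏ j, x j ^ (α j : ℕ)) =
        (α i : ℕ) • ∏ j, x j ^ ((α j : ℕ) - if j = i then 1 else 0)) ∧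
    (∀ D : Derivation (kerDer C d) C C, ∃! c : Fin n → C,
      ∀ y : C, D y = ∑ i, c i * d i y) := by
  have hspan := span_monomials_eq_top d x hdx hp hcomm hpow
  refine ⟨fun c i => (d i).apply_pow_char p c, ⟨linearIndependent_monomials d x hdx hp, hspan⟩,
    fun i α => ?_, existsUnique_derivation_eq_sum d x hdx
      (Algebra.adjoin_range_eq_top_of_span_monomials x hspan)⟩
  simpa [nsmul_eq_mul] using iterate_apply_monomial d x hdx i 1 fun j => α j

end PIPaper
end
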